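/- arXiv:2605.22905 — 2 statements merged into one kernel-verified Lean document; each statement's English description precedes it below -/
import Mathlib

section
/- For n ≥ 2 and p ∈ [0,1], if k ~ Binomial(n, p), then E[1{0 < k < n} · (n - k)/(n - 1)] = (n/(n-1)) · (1-p) · (1 - (1-p)^(n-1)). -/
lemma aux_sum (n : ℕ) (hn : 1 ≤ n) (p : ℝ) :
    ∑ k ∈ Finset.range (n + 1),
      (n.choose k : ℝ) * p ^ k * (1 - p) ^ (n - k) * ((n : ℝ) - k)
    = n * (1 - p) := by
  have h1 : ∀ k ∈ Finset.range (n + 1),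
      (n.choose k : ℝ) * p ^ k * (1 - p) ^ (n - k) * ((n : ℝ) - k)
      = (n : ℝ) * (((n-1).choose k : ℝ) * p ^ k * (1 - p) ^ (n - k)) := by
    intro k hk
    have hk' : k ≤ n := Nat.lt_succ_iff.mp (Finset.mem_range.mp hk)
    have h := Nat.choose_mul_succ_eq (n-1) k
    rw [Nat.sub_add_cancel hn] at h
    have hcast : ((n-1).choose k : ℝ) * n = (n.choose k : ℝ) * ((n : ℝ) - k) := by
      have : ((n-1).choose k * n : ℕ) = (n.choose k * (n - k) : ℕ) := h
      have := congrArg (Nat.cast (R := ℝ)) this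
      push_cast [Nat.cast_sub hk'] at this
      linarith
    linear_combination (-(p ^ k * (1 - p) ^ (n - k))) * hcast
  rw [Finset.sum_congr rfl h1, ← Finset.mul_sum]
  rw [Finset.sum_range_succ]
  have hz : ((n-1).choose n : ℝ) = 0 := by
    rw [Nat.choose_eq_zero_of_lt (by omega)]; simp
  rw [hz]
  have h2 : ∀ k ∈ Finset.range n,
      ((n-1).choose k : ℝ) * p ^ k * (1 - p) ^ (n - k)
      = (1 - p) * (((n-1).choose k : ℝ) * p ^ k * (1 - p) ^ (n - 1 - k)) := by
    intro k hk
    have hk' : k < n := Finset.mem_range.mp hk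
    have : n - k = (n - 1 - k) + 1 := by omega
    rw [this, pow_succ]; ring
  rw [Finset.sum_congr rfl h2, ← Finset.mul_sum]
  have hbin : ∑ k ∈ Finset.range n, ((n-1).choose k : ℝ) * p ^ k * (1 - p) ^ (n - 1 - k)
      = (p + (1 - p)) ^ (n - 1) := by
    rw [add_pow]
    have : n - 1 + 1 = n := by omega
    rw [this]
    refine Finset.sum_congr rfl fun k hk => by ring
  rw [hbin]
  simp

/-- Closed form of the expected difficulty reward: for `n ≥ 2`, `p ∈ [0,1]`,
if `k ~ Binomial(n,p)` then
`E[1{0<k<n} · (n-k)/(n-1)] = (n/(n-1)) (1-p) (1-(1-p)^(n-1))`. -/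
theorem stmt_0 (n : ℕ) (hn : 2 ≤ n) (p : ℝ) (hp : p ∈ Set.Icc (0:ℝ) 1) :
    ∑ k ∈ Finset.range (n + 1),
      (n.choose k : ℝ) * p ^ k * (1 - p) ^ (n - k) *
        (if 0 < k ∧ k < n then ((n : ℝ) - k) / ((n : ℝ) - 1) else 0)
    = ((n : ℝ) / ((n : ℝ) - 1)) * (1 - p) * (1 - (1 - p) ^ (n - 1)) := by
  have hn1 : ((n : ℝ) - 1) ≠ 0 := by
    have : (2 : ℝ) ≤ n := by exact_mod_cast hn
    linarith
  have hpt : ∀ k ∈ Finset.range (n + 1),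
      (n.choose k : ℝ) * p ^ k * (1 - p) ^ (n - k) *
        (if 0 < k ∧ k < n then ((n : ℝ) - k) / ((n : ℝ) - 1) else 0)
      = (n.choose k : ℝ) * p ^ k * (1 - p) ^ (n - k) * ((n : ℝ) - k) / ((n : ℝ) - 1)
        - (if k = 0 then (n : ℝ) * (1 - p) ^ n / ((n : ℝ) - 1) else 0) := by
    intro k hk
    have hk' : k ≤ n := Nat.lt_succ_iff.mp (Finset.mem_range.mp hk)
    rcases Nat.eq_zero_or_pos k with rfl | hk0
    · simp [hn1]
      ring
    · rcases eq_or_lt_of_le hk' with rfl | hkn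
      · rw [if_neg (by omega), if_neg (by omega)]
        simp
      · rw [if_pos ⟨hk0, hkn⟩, if_neg (by omega)]
        ring
  rw [Finset.sum_congr rfl hpt, Finset.sum_sub_distrib]
  rw [Finset.sum_ite_eq' (Finset.range (n+1)) 0
    (fun _ => (n : ℝ) * (1 - p) ^ n / ((n : ℝ) - 1))]
  rw [if_pos (Finset.mem_range.mpr (by omega))]
  have : ∑ k ∈ Finset.range (n + 1),
      (n.choose k : ℝ) * p ^ k * (1 - p) ^ (n - k) * ((n : ℝ) - k) / ((n : ℝ) - 1)
      = (∑ k ∈ Finset.range (n + 1),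
      (n.choose k : ℝ) * p ^ k * (1 - p) ^ (n - k) * ((n : ℝ) - k)) / ((n : ℝ) - 1) := by
    rw [Finset.sum_div]
  rw [this, aux_sum n (by omega) p]
  have hpow : (1 - p) ^ n = (1 - p) ^ (n - 1) * (1 - p) := by
    rw [← pow_succ]
    congr 1; omega
  rw [hpow]
  field_simp
end

section
/- For n ≥ 2, φ_n is strictly increasing on [0, p*] and strictly decreasing on [p*, 1], where φ_n(p) = (n/(n-1))·(1-p)·(1-(1-p)^(n-1)) and p* = 1 - n^(-1/(n-1)). In particular, p* is the unique maximizer of φ_n on [0,1]. -/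
/-!
Substituting `q = 1 - p` turns `φ_n(p)` into `n/(n-1) · (q - qⁿ)`. The derivative `1 - n qⁿ⁻¹`
of `q - qⁿ` vanishes only at `q* = n^(-1/(n-1)) = 1 - p*`, so `q - qⁿ` increases on `[0, q*]`
and decreases on `[q*, ∞)`; the reflection `q = 1 - p` swaps the two intervals.
-/

open Set

theorem StrictMonoOn.apply_lt_of_strictAntiOn {α β : Type*} [LinearOrder α] [Preorder β]
    {f : α → β} {a m b p : α} (hmono : StrictMonoOn f (Icc a m))
    (hanti : StrictAntiOn f (Icc m b)) (hp : p ∈ Icc a b) (hpm : p ≠ m) : f p < f m := by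
  rcases hpm.lt_or_gt with hlt | hgt
  · exact hmono ⟨hp.1, hlt.le⟩ ⟨hp.1.trans hlt.le, le_rfl⟩ hlt
  · exact hanti ⟨le_rfl, hgt.le.trans hp.2⟩ ⟨hgt.le, hp.2⟩ hgt

theorem Real.rpow_neg_inv_natCast_pow {x : ℝ} {k : ℕ} (hx : 0 ≤ x) (hk : k ≠ 0) :
    (x ^ (-(1 / (k : ℝ)))) ^ k = x⁻¹ := by
  rw [Real.rpow_neg hx, inv_pow, one_div, Real.rpow_inv_natCast_pow hx hk]

theorem natCast_mul_rpow_neg_inv_sub_one_pow {n : ℕ} (hn : 2 ≤ n) :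
    (n : ℝ) * ((n : ℝ) ^ (-(1 / ((n : ℝ) - 1)))) ^ (n - 1) = 1 := by
  have hcast : (n : ℝ) - 1 = ((n - 1 : ℕ) : ℝ) := by push_cast [show 1 ≤ n by omega]; ring
  rw [hcast, Real.rpow_neg_inv_natCast_pow (by positivity) (by omega),
    mul_inv_cancel₀ (by positivity)]

theorem div_natCast_sub_one_pos {n : ℕ} (hn : 2 ≤ n) : 0 < (n : ℝ) / ((n : ℝ) - 1) := by
  have : (2 : ℝ) ≤ n := by exact_mod_cast hn
  exact div_pos (by positivity) (by linarith)

theorem mul_one_sub_pow_pred {R : Type*} [CommRing R] (x : R) {n : ℕ} (hn : n ≠ 0) :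
    x * (1 - x ^ (n - 1)) = x - x ^ n := by
  rw [mul_sub, mul_one, ← pow_succ', Nat.sub_add_cancel (Nat.one_le_iff_ne_zero.mpr hn)]

theorem hasDerivAt_sub_pow (n : ℕ) (q : ℝ) :
    HasDerivAt (fun q : ℝ => q - q ^ n) (1 - n * q ^ (n - 1)) q :=
  (hasDerivAt_id q).sub (hasDerivAt_pow n q)

noncomputable def difficultyReward (n : ℕ) (p : ℝ) : ℝ :=
  ((n : ℝ) / ((n : ℝ) - 1)) * (1 - p) * (1 - (1 - p) ^ (n - 1))

section

variable {n : ℕ} {t : ℝ}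

theorem strictMonoOn_sub_pow (hn : 2 ≤ n) (ht : (n : ℝ) * t ^ (n - 1) = 1) :
    StrictMonoOn (fun q : ℝ => q - q ^ n) (Icc 0 t) := by
  refine strictMonoOn_of_hasDerivWithinAt_pos (convex_Icc 0 t) (by fun_prop)
    (fun q _ => (hasDerivAt_sub_pow n q).hasDerivWithinAt) fun q hq => ?_
  rw [interior_Icc] at hq
  have : q ^ (n - 1) < t ^ (n - 1) := pow_lt_pow_left₀ hq.2 hq.1.le (by omega)
  have hn0 : (0 : ℝ) < n := by positivity
  nlinarith

theorem strictAntiOn_sub_pow (hn : 2 ≤ n) (ht0 : 0 ≤ t) (ht : (n : ℝ) * t ^ (n - 1) = 1) :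
    StrictAntiOn (fun q : ℝ => q - q ^ n) (Ici t) := by
  refine strictAntiOn_of_hasDerivWithinAt_neg (convex_Ici t) (by fun_prop)
    (fun q _ => (hasDerivAt_sub_pow n q).hasDerivWithinAt) fun q hq => ?_
  rw [interior_Ici] at hq
  have : t ^ (n - 1) < q ^ (n - 1) := pow_lt_pow_left₀ hq ht0 (by omega)
  have hn0 : (0 : ℝ) < n := by positivity
  nlinarith

theorem difficultyReward_eq (hn : n ≠ 0) (p : ℝ) :
    difficultyReward n p = (n : ℝ) / ((n : ℝ) - 1) * ((1 - p) - (1 - p) ^ n) := by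
  rw [difficultyReward, mul_assoc, mul_one_sub_pow_pred _ hn]

theorem strictMonoOn_difficultyReward (hn : 2 ≤ n) (ht0 : 0 ≤ t)
    (ht : (n : ℝ) * t ^ (n - 1) = 1) : StrictMonoOn (difficultyReward n) (Icc 0 (1 - t)) := by
  intro a ha b hb hab
  rw [difficultyReward_eq (by omega), difficultyReward_eq (by omega)]
  refine mul_lt_mul_of_pos_left ?_ (div_natCast_sub_one_pos hn)
  exact strictAntiOn_sub_pow hn ht0 ht (show t ≤ 1 - b by linarith [hb.2])
    (show t ≤ 1 - a by linarith [ha.2]) (by linarith)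

theorem strictAntiOn_difficultyReward (hn : 2 ≤ n) (ht : (n : ℝ) * t ^ (n - 1) = 1) :
    StrictAntiOn (difficultyReward n) (Icc (1 - t) 1) := by
  intro a ha b hb hab
  rw [difficultyReward_eq (by omega), difficultyReward_eq (by omega)]
  refine mul_lt_mul_of_pos_left ?_ (div_natCast_sub_one_pos hn)
  exact strictMonoOn_sub_pow hn ht ⟨by linarith [hb.2], by linarith [hb.1]⟩
    ⟨by linarith [ha.2], by linarith [ha.1]⟩ (by linarith)

end

/-- `φ_n` is strictly increasing on `[0,p*]`, strictly decreasing on `[p*,1]`,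
and `p*` is the unique maximizer of `φ_n` on `[0,1]`. -/
theorem stmt_6 (n : ℕ) (hn : 2 ≤ n) :
    StrictMonoOn (fun p : ℝ => ((n : ℝ) / ((n : ℝ) - 1)) * (1 - p) * (1 - (1 - p) ^ (n - 1)))
      (Set.Icc 0 (1 - (n : ℝ) ^ (-(1 / ((n : ℝ) - 1))))) ∧
    StrictAntiOn (fun p : ℝ => ((n : ℝ) / ((n : ℝ) - 1)) * (1 - p) * (1 - (1 - p) ^ (n - 1)))
      (Set.Icc (1 - (n : ℝ) ^ (-(1 / ((n : ℝ) - 1)))) 1) ∧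
    ∀ p ∈ Set.Icc (0:ℝ) 1, p ≠ 1 - (n : ℝ) ^ (-(1 / ((n : ℝ) - 1))) →
      ((n : ℝ) / ((n : ℝ) - 1)) * (1 - p) * (1 - (1 - p) ^ (n - 1)) <
      ((n : ℝ) / ((n : ℝ) - 1)) * (1 - (1 - (n : ℝ) ^ (-(1 / ((n : ℝ) - 1))))) *
        (1 - (1 - (1 - (n : ℝ) ^ (-(1 / ((n : ℝ) - 1))))) ^ (n - 1)) := by
  have ht := natCast_mul_rpow_neg_inv_sub_one_pow hn
  have hmono := strictMonoOn_difficultyReward hn (by positivity) ht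
  have hanti := strictAntiOn_difficultyReward hn ht
  exact ⟨hmono, hanti, fun p hp hpt => hmono.apply_lt_of_strictAntiOn hanti hp hpt⟩
end
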